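/- arXiv:1706.01191 — 4 statements merged into one kernel-verified Lean document; each statement's English description precedes it below -/
import Mathlib

section
/- Let ρ : ℝ → ℝ be convex and twice continuously differentiable with ρ'' > 0. For fixed z ∈ ℝ, the map b ↦ prox_{bρ}(z) (b > 0) is differentiable with ∂/∂b prox_{bρ}(z) = −ρ'(x)/(1 + b·ρ''(x)) evaluated at x = prox_{bρ}(z). In particular, if ρ' ≥ 0 everywhere then b ↦ prox_{bρ}(z) is nonincreasing in b. -/
theorem stmt_5 (ρ : ℝ → ℝ) (hconv : ConvexOn ℝ Set.univ ρ)
    (hC2 : ContDiff ℝ 2 ρ) (hpos : ∀ x, 0 < deriv (deriv ρ) x)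
    (z : ℝ) (P : ℝ → ℝ)
    (hP : ∀ b, 0 < b → b * deriv ρ (P b) + P b = z) :
    (∀ b, 0 < b → HasDerivAt P
      (-(deriv ρ (P b)) / (1 + b * deriv (deriv ρ) (P b))) b) ∧
    ((∀ x, 0 ≤ deriv ρ x) → AntitoneOn P (Set.Ioi 0)) := by
  -- basic regularity
  have h21 : ContDiff ℝ 1 (deriv ρ) := by
    have h2 : ContDiff ℝ ((1 : WithTop ℕ∞) + 1) ρ := by
      norm_num
      exact hC2
    exact (contDiff_succ_iff_deriv.mp h2).2.2
  have hρ'diff : Differentiable ℝ (deriv ρ) := h21.differentiable one_ne_zero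
  have hρ''cont : Continuous (deriv (deriv ρ)) := (contDiff_one_iff_deriv.mp h21).2
  -- for b > 0, x ↦ b * ρ'(x) + x is strictly monotone
  have hmono : ∀ b : ℝ, 0 < b → StrictMono (fun x => b * deriv ρ x + x) := by
    intro b hb
    apply strictMono_of_deriv_pos
    intro x
    have hd : HasDerivAt (fun x => b * deriv ρ x + x)
        (b * deriv (deriv ρ) x + 1) x :=
      ((hρ'diff x).hasDerivAt.const_mul b).add (hasDerivAt_id x)
    rw [hd.deriv]
    have := hpos x
    nlinarith
  -- continuity of P at every b₀ > 0
  have hcont : ∀ b₀ : ℝ, 0 < b₀ → ContinuousAt P b₀ := by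
    intro b₀ hb₀
    rw [ContinuousAt, Metric.tendsto_nhds]
    intro ε hε
    set x₀ := P b₀ with hx₀
    have h1 : b₀ * deriv ρ (x₀ - ε) + (x₀ - ε) < z := by
      have := (hmono b₀ hb₀) (show x₀ - ε < x₀ by linarith)
      have hx : b₀ * deriv ρ x₀ + x₀ = z := hP b₀ hb₀
      simpa [hx] using this
    have h2 : z < b₀ * deriv ρ (x₀ + ε) + (x₀ + ε) := by
      have := (hmono b₀ hb₀) (show x₀ < x₀ + ε by linarith)
      have hx : b₀ * deriv ρ x₀ + x₀ = z := hP b₀ hb₀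
      simpa [hx] using this
    have hc1 : Continuous (fun b : ℝ => b * deriv ρ (x₀ - ε) + (x₀ - ε)) := by
      continuity
    have hc2 : Continuous (fun b : ℝ => b * deriv ρ (x₀ + ε) + (x₀ + ε)) := by
      continuity
    have e1 : ∀ᶠ b in nhds b₀, b * deriv ρ (x₀ - ε) + (x₀ - ε) < z :=
      (hc1.continuousAt).eventually_lt continuousAt_const h1
    have e2 : ∀ᶠ b in nhds b₀, z < b * deriv ρ (x₀ + ε) + (x₀ + ε) :=
      continuousAt_const.eventually_lt (hc2.continuousAt) h2
    have e3 : ∀ᶠ b in nhds b₀, 0 < b :=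
      eventually_gt_nhds hb₀
    filter_upwards [e1, e2, e3] with b hb1 hb2 hb3
    have hPb : b * deriv ρ (P b) + P b = z := hP b hb3
    have hlt : x₀ - ε < P b := by
      by_contra h
      push_neg at h
      have := (hmono b hb3).monotone h
      rw [hPb] at this
      linarith
    have hgt : P b < x₀ + ε := by
      by_contra h
      push_neg at h
      have := (hmono b hb3).monotone h
      rw [hPb] at this
      linarith
    rw [Real.dist_eq, abs_sub_lt_iff]
    constructor <;> linarith
  have hdenom : ∀ b x : ℝ, 0 < b → 0 < 1 + b * deriv (deriv ρ) x := by
    intro b x hb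
    have := hpos x
    nlinarith
  -- main derivative statement
  have hd : ∀ b, 0 < b → HasDerivAt P
      (-(deriv ρ (P b)) / (1 + b * deriv (deriv ρ) (P b))) b := by
    intro b hb
    by_cases hz : deriv ρ z = 0
    · -- P is constantly z near b
      have hconst : ∀ b', 0 < b' → P b' = z := by
        intro b' hb'
        have : (fun x => b' * deriv ρ x + x) (P b') = (fun x => b' * deriv ρ x + x) z := by
          simp [hP b' hb', hz]
        exact (hmono b' hb').injective this
      have heq : ∀ᶠ b' in nhds b, P b' = z := by
        filter_upwards [eventually_gt_nhds hb] with b' hb' using hconst b' hb'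
      have : HasDerivAt P 0 b :=
        (hasDerivAt_const b z).congr_of_eventuallyEq heq
      convert this using 1
      rw [hconst b hb, hz]
      simp
    · -- deriv ρ (P b) ≠ 0; use local inverse h x = (z - x) / deriv ρ x
      have hne : ∀ b', 0 < b' → deriv ρ (P b') ≠ 0 := by
        intro b' hb' h0
        apply hz
        have := hP b' hb'
        rw [h0, mul_zero, zero_add] at this
        rw [← this]
        exact h0
      set x₀ := P b with hx₀
      have hne₀ : deriv ρ x₀ ≠ 0 := hne b hb
      have hinv : ∀ᶠ b' in nhds b, (z - P b') / deriv ρ (P b') = b' := by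
        filter_upwards [eventually_gt_nhds hb] with b' hb'
        have h1 : z - P b' = b' * deriv ρ (P b') := by
          have := hP b' hb'; linarith
        rw [h1, mul_div_assoc, div_self (hne b' hb'), mul_one]
      have hdh : HasDerivAt (fun x => (z - x) / deriv ρ x)
          (((-1) * deriv ρ x₀ - (z - x₀) * deriv (deriv ρ) x₀) / (deriv ρ x₀) ^ 2) x₀ := by
        have h := ((hasDerivAt_id x₀).const_sub z).div (hρ'diff x₀).hasDerivAt hne₀
        exact h.congr_deriv (by simp)
      have hzx : z - x₀ = b * deriv ρ x₀ := by
        simp only [hx₀]; linarith [hP b hb]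
      have hne' : ((-1) * deriv ρ x₀ - (z - x₀) * deriv (deriv ρ) x₀) / (deriv ρ x₀) ^ 2 ≠ 0 := by
        rw [hzx]
        have hd1 := hdenom b x₀ hb
        intro h
        rw [div_eq_zero_iff] at h
        rcases h with h | h
        · apply hne₀
          nlinarith
        · exact hne₀ (pow_eq_zero_iff (by norm_num) |>.mp h)
      have := HasDerivAt.of_local_left_inverse (hcont b hb) hdh hne' hinv
      refine this.congr_deriv ?_
      rw [hzx]
      have hd1 := hdenom b x₀ hb
      have key : (-1 * deriv ρ x₀ - b * deriv ρ x₀ * deriv (deriv ρ) x₀) / deriv ρ x₀ ^ 2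
          = -(1 + b * deriv (deriv ρ) x₀) / deriv ρ x₀ := by
        rw [div_eq_div_iff (pow_ne_zero 2 hne₀) hne₀]
        ring
      rw [key, inv_div, div_neg, neg_div]
  refine ⟨hd, fun hnn => ?_⟩
  apply antitoneOn_of_deriv_nonpos (convex_Ioi 0)
  · intro b hb
    exact ((hd b hb).continuousAt).continuousWithinAt
  · rw [interior_Ioi]
    intro b hb
    exact ((hd b hb).differentiableAt).differentiableWithinAt
  · rw [interior_Ioi]
    intro b hb
    rw [(hd b hb).deriv]
    apply div_nonpos_of_nonpos_of_nonneg
    · simp [hnn (P b)]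
    · exact (hdenom b (P b) hb).le
end

section
/- Let G₍ᵢ₎ ∈ ℝᵈˣᵈ be symmetric with G₍ᵢ₎ ⪰ λ·I for some λ > 0, let x ∈ ℝᵈ, c ≥ 0, and set G := G₍ᵢ₎ + (c/n)·x xᵀ. Then 0 ≤ Tr(G₍ᵢ₎⁻¹) − Tr(G⁻¹) ≤ 1/λ. -/
open Matrix

private lemma mul_vecMulVec' {d : ℕ} (A : Matrix (Fin d) (Fin d) ℝ) (u v : Fin d → ℝ) :
    A * vecMulVec u v = vecMulVec (A *ᵥ u) v := by
  ext i j
  simp [Matrix.mul_apply, vecMulVec_apply, Matrix.mulVec, dotProduct,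
    Finset.sum_mul, mul_assoc]

private lemma vecMulVec_mul' {d : ℕ} (u v : Fin d → ℝ) (A : Matrix (Fin d) (Fin d) ℝ) :
    vecMulVec u v * A = vecMulVec u (v ᵥ* A) := by
  ext i j
  simp [Matrix.mul_apply, vecMulVec_apply, Matrix.vecMul, dotProduct,
    Finset.mul_sum, mul_assoc]

private lemma trace_vecMulVec' {d : ℕ} (u v : Fin d → ℝ) :
    (vecMulVec u v).trace = u ⬝ᵥ v := by
  simp [Matrix.trace, Matrix.diag, vecMulVec_apply, dotProduct]

theorem stmt_15 (d n : ℕ) (hn : 0 < n) (Gi : Matrix (Fin d) (Fin d) ℝ)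
    (hGisymm : Gi.IsSymm) (lam : ℝ) (hlam : 0 < lam)
    (hGi : (Gi - lam • (1 : Matrix (Fin d) (Fin d) ℝ)).PosSemidef)
    (x : Fin d → ℝ) (c : ℝ) (hc : 0 ≤ c)
    (G : Matrix (Fin d) (Fin d) ℝ)
    (hG : G = Gi + (c / n) • Matrix.vecMulVec x x) :
    0 ≤ Gi⁻¹.trace - G⁻¹.trace ∧ Gi⁻¹.trace - G⁻¹.trace ≤ 1 / lam := by
  -- basic positivity facts
  have hGiPD : Gi.PosDef := by
    refine Matrix.PosDef.of_dotProduct_mulVec_pos (by simpa [Matrix.IsHermitian, Matrix.IsSymm, Matrix.conjTranspose_eq_transpose_of_trivial] using hGisymm) fun v hv => ?_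
    have h1 := hGi.dotProduct_mulVec_nonneg v
    have h2 : (0:ℝ) < v ⬝ᵥ v := by
      have := dotProduct_self_star_eq_zero (v := v)
      have hvv : (0:ℝ) ≤ v ⬝ᵥ v := by
        simpa [dotProduct] using Finset.sum_nonneg fun i _ => mul_self_nonneg (v i)
      rcases hvv.lt_or_eq with h | h
      · exact h
      · exfalso; apply hv
        have : star v ⬝ᵥ v = 0 := by simpa using h.symm
        simpa using (dotProduct_self_star_eq_zero).mp this
    have hexp : v ⬝ᵥ (Gi *ᵥ v) =
        v ⬝ᵥ ((Gi - lam • (1 : Matrix (Fin d) (Fin d) ℝ)) *ᵥ v) + lam * (v ⬝ᵥ v) := by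
      rw [Matrix.sub_mulVec, dotProduct_sub]
      simp [Matrix.smul_mulVec, Matrix.one_mulVec, dotProduct_smul, smul_eq_mul]
      try ring
    simp only [star_trivial] at h1 ⊢
    rw [hexp]
    have : 0 < lam * (v ⬝ᵥ v) := mul_pos hlam h2
    linarith
  have hdet : IsUnit Gi.det := hGiPD.det_pos.ne'.isUnit
  have hGiGi : Gi * Gi⁻¹ = 1 := Matrix.mul_nonsing_inv Gi hdet
  have hinvsymm : Gi⁻¹ᵀ = Gi⁻¹ := by
    rw [Matrix.transpose_nonsing_inv, hGisymm]
  set t : ℝ := c / n with ht_def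
  have ht : 0 ≤ t := div_nonneg hc (Nat.cast_nonneg n)
  set u : Fin d → ℝ := Gi⁻¹ *ᵥ x with hu_def
  set s : ℝ := x ⬝ᵥ u with hs_def
  have hs : 0 ≤ s := by
    have := hGiPD.inv.posSemidef.dotProduct_mulVec_nonneg x
    simpa [hu_def, hs_def] using this
  set D : ℝ := 1 + t * s with hD_def
  have hD : 0 < D := by have := mul_nonneg ht hs; simp [hD_def]; linarith
  set B : Matrix (Fin d) (Fin d) ℝ := Gi⁻¹ - (t / D) • vecMulVec u u with hB_def
  have hGix : Gi *ᵥ u = x := by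
    rw [hu_def, Matrix.mulVec_mulVec, hGiGi, Matrix.one_mulVec]
  have hxGi : x ᵥ* Gi⁻¹ = u := by
    rw [← hinvsymm, Matrix.vecMul_transpose, hu_def]
  -- the four products
  have h1 : Gi * vecMulVec u u = vecMulVec x u := by rw [mul_vecMulVec', hGix]
  have h2 : vecMulVec x x * Gi⁻¹ = vecMulVec x u := by rw [vecMulVec_mul', hxGi]
  have h3 : vecMulVec x x * vecMulVec u u = s • vecMulVec x u := by
    rw [mul_vecMulVec']
    have : vecMulVec x x *ᵥ u = s • x := by
      ext i
      simp [vecMulVec_apply, Matrix.mulVec, dotProduct, hs_def, Finset.sum_mul,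
        Finset.mul_sum, mul_comm, mul_assoc]
      try rw [Finset.mul_sum]
      try (congr 1; ext j; ring)
    rw [this]
    ext i j
    simp [vecMulVec_apply, smul_eq_mul]
    ring
  have hGB : G * B = 1 := by
    have expand : G * B = 1 + (t - t / D - t * (t / D) * s) • vecMulVec x u := by
      rw [hG, hB_def]
      simp only [Matrix.mul_sub, Matrix.add_mul, Matrix.smul_mul, Matrix.mul_smul,
        hGiGi, h1, h2, h3, smul_smul]
      module
    have hcoef : t - t / D - t * (t / D) * s = 0 := by
      field_simp
      ring
    rw [expand, hcoef, zero_smul, add_zero]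
  have hGinv : G⁻¹ = B := Matrix.inv_eq_right_inv hGB
  have htr : Gi⁻¹.trace - G⁻¹.trace = (t / D) * (u ⬝ᵥ u) := by
    rw [hGinv, hB_def, Matrix.trace_sub, Matrix.trace_smul, trace_vecMulVec']
    simp [smul_eq_mul]
  have huu : 0 ≤ u ⬝ᵥ u := by
    simpa [dotProduct] using Finset.sum_nonneg fun i _ => mul_self_nonneg (u i)
  have hq : lam * (u ⬝ᵥ u) ≤ s := by
    have h0 := hGi.dotProduct_mulVec_nonneg u
    simp only [star_trivial] at h0
    have hexp : u ⬝ᵥ ((Gi - lam • (1 : Matrix (Fin d) (Fin d) ℝ)) *ᵥ u)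
        = u ⬝ᵥ x - lam * (u ⬝ᵥ u) := by
      rw [Matrix.sub_mulVec, dotProduct_sub, hGix]
      simp [Matrix.smul_mulVec, Matrix.one_mulVec, dotProduct_smul, smul_eq_mul]
    rw [hexp] at h0
    have : u ⬝ᵥ x = s := by rw [hs_def, dotProduct_comm]
    linarith [this ▸ h0]
  constructor
  · rw [htr]
    exact mul_nonneg (div_nonneg ht hD.le) huu
  · rw [htr]
    rw [div_mul_eq_mul_div, div_le_div_iff₀ hD hlam]
    have h5 : t * (lam * (u ⬝ᵥ u)) ≤ t * s := mul_le_mul_of_nonneg_left hq ht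
    nlinarith [mul_nonneg ht hs]
end

section
/- Let D be an n×n diagonal matrix with 0 ≤ Dᵢᵢ ≤ M for all i, X̃ ∈ ℝⁿˣ⁽ᵖ⁻¹⁾, G := (1/n)X̃ᵀDX̃ assumed to satisfy G ⪰ λ·I with λ > 0, and w := (1/n)X̃ᵀD·u for some u ∈ ℝⁿ. Then wᵀG⁻²w ≤ (M/(nλ))·‖u‖². -/
open Matrix in
theorem stmt_16 (n m : ℕ) (hn : 0 < n) (M lam : ℝ) (hM : 0 ≤ M) (hlam : 0 < lam)
    (d : Fin n → ℝ) (hd : ∀ i, 0 ≤ d i ∧ d i ≤ M)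
    (Xt : Matrix (Fin n) (Fin m) ℝ) (u : Fin n → ℝ)
    (G : Matrix (Fin m) (Fin m) ℝ)
    (hG : G = (n : ℝ)⁻¹ • (Xt.transpose * Matrix.diagonal d * Xt))
    (hGlam : (G - lam • (1 : Matrix (Fin m) (Fin m) ℝ)).PosSemidef)
    (w : Fin m → ℝ)
    (hw : w = (n : ℝ)⁻¹ • (Xt.transpose.mulVec ((Matrix.diagonal d).mulVec u))) :
    w ⬝ᵥ (G⁻¹ * G⁻¹).mulVec w ≤ M / (n * lam) * (u ⬝ᵥ u) := by
  have hn' : (0:ℝ) < (n:ℝ) := by exact_mod_cast hn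
  -- G is Hermitian (symmetric)
  have hGherm : G.IsHermitian := by
    have h1 : (lam • (1 : Matrix (Fin m) (Fin m) ℝ)).IsHermitian := by
      simp [Matrix.IsHermitian, Matrix.conjTranspose_smul]
    have := hGlam.1.add h1
    simpa using this
  -- G is positive definite
  have hGpd : G.PosDef := by
    refine Matrix.PosDef.of_dotProduct_mulVec_pos hGherm fun x hx => ?_
    have h1 := hGlam.dotProduct_mulVec_nonneg x
    have hGx : G *ᵥ x = (G - lam • 1) *ᵥ x + lam • x := by
      rw [Matrix.sub_mulVec, Matrix.smul_mulVec, Matrix.one_mulVec]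
      abel
    have hxx : (0:ℝ) < x ⬝ᵥ x := by
      have : x ⬝ᵥ x = ∑ i, x i ^ 2 := by
        simp [dotProduct, sq]
      rw [this]
      apply Finset.sum_pos'
      · intro i _; positivity
      · obtain ⟨i, hi⟩ := Function.ne_iff.mp hx
        refine ⟨i, Finset.mem_univ i, ?_⟩
        have hi' : x i ≠ 0 := by simpa using hi
        exact (pow_pos (abs_pos.mpr hi') 2).trans_le (sq_abs (x i)).le
    have : star x ⬝ᵥ G *ᵥ x = star x ⬝ᵥ (G - lam • 1) *ᵥ x + lam * (x ⬝ᵥ x) := by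
      rw [hGx, dotProduct_add, dotProduct_smul]
      simp [star_trivial]
    rw [this]
    have : (0:ℝ) < lam * (x ⬝ᵥ x) := mul_pos hlam hxx
    simp only [star_trivial] at h1 ⊢
    linarith
  have hdet : IsUnit G.det := isUnit_iff_isUnit_det _ |>.1 hGpd.isUnit
  have hGinv : G * G⁻¹ = 1 := Matrix.mul_nonsing_inv G hdet
  set v : Fin m → ℝ := G⁻¹ *ᵥ w with hv
  have hGv : G *ᵥ v = w := by
    rw [hv, Matrix.mulVec_mulVec, hGinv, Matrix.one_mulVec]
  -- LHS = v ⬝ᵥ v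
  have hinvherm : (G⁻¹)ᵀ = G⁻¹ := hGherm.inv
  have hLHS : w ⬝ᵥ (G⁻¹ * G⁻¹) *ᵥ w = v ⬝ᵥ v := by
    rw [← Matrix.mulVec_mulVec, Matrix.dotProduct_mulVec, ← hinvherm,
      Matrix.vecMul_transpose, hinvherm]
  set y : Fin n → ℝ := Xt *ᵥ v with hy
  set a : ℝ := v ⬝ᵥ G *ᵥ v with ha
  -- a = n⁻¹ * ∑ d i * y i ^ 2
  have haS1 : a = (n:ℝ)⁻¹ * ∑ i, d i * y i ^ 2 := by
    rw [ha, hG, Matrix.smul_mulVec, dotProduct_smul, smul_eq_mul]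
    congr 1
    rw [← Matrix.mulVec_mulVec, ← Matrix.mulVec_mulVec, Matrix.dotProduct_mulVec,
      Matrix.vecMul_transpose]
    simp only [dotProduct, Matrix.mulVec_diagonal]
    exact Finset.sum_congr rfl fun i _ => by ring
  -- a = v ⬝ᵥ w = n⁻¹ * ∑ d i * y i * u i
  have haS3 : a = (n:ℝ)⁻¹ * ∑ i, d i * y i * u i := by
    rw [ha, hGv, hw, dotProduct_smul, smul_eq_mul]
    congr 1
    rw [Matrix.dotProduct_mulVec, Matrix.vecMul_transpose]
    simp only [dotProduct, Matrix.mulVec_diagonal]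
    exact Finset.sum_congr rfl fun i _ => by ring
  -- Cauchy-Schwarz on weighted sums
  have hcs : (∑ i, d i * y i * u i) ^ 2 ≤ (∑ i, d i * y i ^ 2) * (∑ i, d i * u i ^ 2) := by
    have h := Finset.sum_mul_sq_le_sq_mul_sq Finset.univ
      (fun i => Real.sqrt (d i) * y i) (fun i => Real.sqrt (d i) * u i)
    have e1 : ∀ i, (Real.sqrt (d i) * y i) * (Real.sqrt (d i) * u i) = d i * y i * u i := by
      intro i
      have : Real.sqrt (d i) * Real.sqrt (d i) = d i := Real.mul_self_sqrt (hd i).1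
      ring_nf
      rw [Real.sq_sqrt (hd i).1]
      ring
    have e2 : ∀ i, (Real.sqrt (d i) * y i) ^ 2 = d i * y i ^ 2 := by
      intro i; rw [mul_pow, Real.sq_sqrt (hd i).1]
    have e3 : ∀ i, (Real.sqrt (d i) * u i) ^ 2 = d i * u i ^ 2 := by
      intro i; rw [mul_pow, Real.sq_sqrt (hd i).1]
    calc (∑ i, d i * y i * u i) ^ 2
        = (∑ i, (Real.sqrt (d i) * y i) * (Real.sqrt (d i) * u i)) ^ 2 := by
          congr 1; exact Finset.sum_congr rfl fun i _ => (e1 i).symm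
      _ ≤ (∑ i, (Real.sqrt (d i) * y i) ^ 2) * (∑ i, (Real.sqrt (d i) * u i) ^ 2) := h
      _ = (∑ i, d i * y i ^ 2) * (∑ i, d i * u i ^ 2) := by
          rw [Finset.sum_congr rfl fun i _ => e2 i, Finset.sum_congr rfl fun i _ => e3 i]
  have hS1nonneg : (0:ℝ) ≤ ∑ i, d i * y i ^ 2 :=
    Finset.sum_nonneg fun i _ => mul_nonneg (hd i).1 (sq_nonneg _)
  have hS2le : ∑ i, d i * u i ^ 2 ≤ M * (u ⬝ᵥ u) := by
    have : (u ⬝ᵥ u) = ∑ i, u i ^ 2 := by simp [dotProduct, sq]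
    rw [this, Finset.mul_sum]
    exact Finset.sum_le_sum fun i _ => mul_le_mul_of_nonneg_right (hd i).2 (sq_nonneg _)
  -- S1 = S3 since both n*a
  have hS1S3 : ∑ i, d i * y i ^ 2 = ∑ i, d i * y i * u i := by
    have := haS1.symm.trans haS3
    field_simp at this
    linarith
  -- S1 ≤ M * (u ⬝ᵥ u)
  have hS1le : ∑ i, d i * y i ^ 2 ≤ M * (u ⬝ᵥ u) := by
    set S1 := ∑ i, d i * y i ^ 2
    set S2 := ∑ i, d i * u i ^ 2
    have h2 : S1 ^ 2 ≤ S1 * S2 := by rw [sq, hS1S3] at *; nlinarith [hcs, hS1S3]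
    rcases eq_or_lt_of_le hS1nonneg with h0 | h0
    · have hu2 : (0:ℝ) ≤ u ⬝ᵥ u := by
        have : (u ⬝ᵥ u) = ∑ i, u i ^ 2 := by simp [dotProduct, sq]
        rw [this]; positivity
      rw [← h0]; positivity
    · have : S1 ≤ S2 := by nlinarith
      linarith
  have ha_le : a ≤ (n:ℝ)⁻¹ * (M * (u ⬝ᵥ u)) := by
    rw [haS1]
    exact mul_le_mul_of_nonneg_left hS1le (by positivity)
  -- lam * ‖v‖² ≤ a
  have hlv : lam * (v ⬝ᵥ v) ≤ a := by
    have h1 := hGlam.dotProduct_mulVec_nonneg v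
    simp only [star_trivial] at h1
    rw [Matrix.sub_mulVec, dotProduct_sub, Matrix.smul_mulVec,
      Matrix.one_mulVec, dotProduct_smul, smul_eq_mul] at h1
    linarith [h1]
  have hvv : v ⬝ᵥ v ≤ M / (n * lam) * (u ⬝ᵥ u) := by
    have h1 : v ⬝ᵥ v ≤ a / lam := by
      rw [le_div_iff₀ hlam]; linarith [hlv]
    have h2 : a / lam ≤ ((n:ℝ)⁻¹ * (M * (u ⬝ᵥ u))) / lam := by gcongr
    have h3 : ((n:ℝ)⁻¹ * (M * (u ⬝ᵥ u))) / lam = M / (n * lam) * (u ⬝ᵥ u) := by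
      field_simp
    linarith [h1, h2, h3.ge, h3.le]
  rw [hLHS]
  exact hvv
end

section
/- Let ρ(t) = log(1 + eᵗ) (logistic effective link) and for b > 0, z ∈ ℝ let x = prox_{bρ}(z) denote the unique solution of b·ρ'(x) + x = z. Then for every fixed z, lim_{b→∞} b·ρ''(prox_{bρ}(z)) = ∞. -/
open Real Filter

theorem stmt_19 (ρ : ℝ → ℝ) (hρ : ∀ t, ρ t = Real.log (1 + Real.exp t))
    (z : ℝ) (P : ℝ → ℝ)
    (hP : ∀ b, 0 < b → b * deriv ρ (P b) + P b = z) :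
    Filter.Tendsto (fun b => b * deriv (deriv ρ) (P b))
      Filter.atTop Filter.atTop := by
  have hpos : ∀ x : ℝ, (0:ℝ) < 1 + Real.exp x := fun x => by positivity
  have hder1 : ∀ x : ℝ, HasDerivAt (fun t => 1 + Real.exp t) (Real.exp x) x := by
    intro x
    simpa using (Real.hasDerivAt_exp x).const_add 1
  have hρ' : deriv ρ = fun x => Real.exp x / (1 + Real.exp x) := by
    funext x
    have hρeq : ρ = fun t => Real.log (1 + Real.exp t) := funext hρ
    rw [hρeq]
    exact ((hder1 x).log (ne_of_gt (hpos x))).deriv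
  have hρ'' : ∀ x, deriv (deriv ρ) x = Real.exp x / (1 + Real.exp x) ^ 2 := by
    intro x
    rw [hρ']
    have hd : HasDerivAt (fun t => Real.exp t / (1 + Real.exp t))
        ((Real.exp x * (1 + Real.exp x) - Real.exp x * Real.exp x) / (1 + Real.exp x) ^ 2) x :=
      (Real.hasDerivAt_exp x).div (hder1 x) (ne_of_gt (hpos x))
    rw [hd.deriv]
    field_simp
    ring
  have hkey : ∀ b, 0 < b →
      b * deriv (deriv ρ) (P b) = (z - P b) * (1 / (1 + Real.exp (P b))) := by
    intro b hb
    have h := hP b hb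
    rw [hρ'] at h
    rw [hρ'' (P b)]
    have hne := ne_of_gt (hpos (P b))
    field_simp at h ⊢
    nlinarith [h, hpos (P b)]
  have hPbot : Tendsto P atTop atBot := by
    rw [tendsto_atBot]
    intro M
    have hfM : 0 < Real.exp M / (1 + Real.exp M) := div_pos (Real.exp_pos M) (hpos M)
    filter_upwards [eventually_gt_atTop
      (max 0 ((z - M) / (Real.exp M / (1 + Real.exp M))))] with b hb
    have hb0 : 0 < b := lt_of_le_of_lt (le_max_left _ _) hb
    by_contra h
    push_neg at h
    -- h : M < P b
    have hexp : Real.exp M ≤ Real.exp (P b) := Real.exp_le_exp.mpr h.le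
    have hmono : Real.exp M / (1 + Real.exp M) ≤ Real.exp (P b) / (1 + Real.exp (P b)) := by
      rw [div_le_div_iff₀ (hpos M) (hpos (P b))]
      nlinarith
    have heq := hP b hb0
    rw [hρ'] at heq
    have hb2 : (z - M) / (Real.exp M / (1 + Real.exp M)) < b :=
      lt_of_le_of_lt (le_max_right _ _) hb
    have hb3 : z - M < b * (Real.exp M / (1 + Real.exp M)) :=
      (div_lt_iff₀ hfM).mp hb2
    have hchain : b * (Real.exp M / (1 + Real.exp M)) ≤ z - M := by
      have h1 : b * (Real.exp M / (1 + Real.exp M)) ≤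
          b * (Real.exp (P b) / (1 + Real.exp (P b))) :=
        mul_le_mul_of_nonneg_left hmono hb0.le
      have h2 : b * (Real.exp (P b) / (1 + Real.exp (P b))) = z - P b := by linarith
      linarith
    linarith
  have h1 : Tendsto (fun b => z - P b) atTop atTop := by
    have := tendsto_neg_atBot_atTop.comp hPbot
    have h3 : Tendsto (fun b => z + -P b) atTop atTop :=
      tendsto_atTop_add_const_left _ z this
    simpa [sub_eq_add_neg] using h3
  have h2 : Tendsto (fun b => 1 / (1 + Real.exp (P b))) atTop (nhds 1) := by
    have hexp : Tendsto (fun b => Real.exp (P b)) atTop (nhds 0) :=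
      Real.tendsto_exp_atBot.comp hPbot
    have hden : Tendsto (fun b => 1 + Real.exp (P b)) atTop (nhds 1) := by
      simpa using tendsto_const_nhds.add hexp
    have := ((tendsto_const_nhds : Tendsto (fun _ : ℝ => (1:ℝ)) atTop (nhds 1)).div
      hden one_ne_zero)
    simpa [Pi.div_def] using this
  have hmul : Tendsto (fun b => (z - P b) * (1 / (1 + Real.exp (P b)))) atTop atTop :=
    h1.atTop_mul_pos one_pos h2
  refine hmul.congr' ?_
  filter_upwards [eventually_gt_atTop 0] with b hb
  exact (hkey b hb).symm
end
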